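/- arXiv:2512.18308 — 3 statements merged into one kernel-verified Lean document; each statement's English description precedes it below -/
import Mathlib

section
/- The squared Gauss map G² of the gyrating H'-T surface descends to the torus ℂ/(ℤ + ℤτ): let τ ∈ ℂ with Im τ > 0. Then for all z ∈ ℂ one has G²(z + 1) = G²(z) and G²(z + τ) = G²(z). -/
open Complex

/-- The Jacobi theta function θ₁(z;τ), defined via Mathlib's `jacobiTheta₂` by
θ₁(z;τ) = −i·exp(iπτ/4 + iπz)·jacobiTheta₂(z + (1+τ)/2, τ). -/
noncomputable def theta1 (z τ : ℂ) : ℂ :=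
  -I * Complex.exp (I * (Real.pi : ℂ) * τ / 4 + I * (Real.pi : ℂ) * z) *
    jacobiTheta₂ (z + (1 + τ) / 2) τ

/-- The squared Gauss map of the gyrating H'-T surface:
G²(z) = −exp(iπτ/3)·exp(2πi z)·θ₁(3z; 3τ) / θ₁(3z − τ; 3τ). -/
noncomputable def Gsq (τ z : ℂ) : ℂ :=
  -Complex.exp (I * (Real.pi : ℂ) * τ / 3) * Complex.exp (2 * (Real.pi : ℂ) * I * z) *
    theta1 (3 * z) (3 * τ) / theta1 (3 * z - τ) (3 * τ)

lemma theta1_add_one (w τ : ℂ) : theta1 (w + 1) τ = -theta1 w τ := by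
  unfold theta1
  rw [show w + 1 + (1 + τ) / 2 = (w + (1 + τ) / 2) + 1 by ring, jacobiTheta₂_add_left]
  have : Complex.exp (I * (Real.pi : ℂ) * τ / 4 + I * (Real.pi : ℂ) * (w + 1)) =
      -Complex.exp (I * (Real.pi : ℂ) * τ / 4 + I * (Real.pi : ℂ) * w) := by
    rw [show I * (Real.pi : ℂ) * τ / 4 + I * (Real.pi : ℂ) * (w + 1) =
        (I * (Real.pi : ℂ) * τ / 4 + I * (Real.pi : ℂ) * w) + (Real.pi : ℂ) * I by ring,
      Complex.exp_add, Complex.exp_pi_mul_I]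
    ring
  rw [this]; ring

lemma theta1_add_tau (w τ : ℂ) :
    theta1 (w + τ) τ = -Complex.exp (-(Real.pi : ℂ) * I * τ - 2 * (Real.pi : ℂ) * I * w) *
      theta1 w τ := by
  unfold theta1
  rw [show w + τ + (1 + τ) / 2 = (w + (1 + τ) / 2) + τ by ring, jacobiTheta₂_add_left']
  have : Complex.exp (I * (Real.pi : ℂ) * τ / 4 + I * (Real.pi : ℂ) * (w + τ)) *
      Complex.exp (-(Real.pi : ℂ) * I * (τ + 2 * (w + (1 + τ) / 2))) =
      -(Complex.exp (-(Real.pi : ℂ) * I * τ - 2 * (Real.pi : ℂ) * I * w) *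
        Complex.exp (I * (Real.pi : ℂ) * τ / 4 + I * (Real.pi : ℂ) * w)) := by
    rw [← Complex.exp_add,
      show (I * (Real.pi : ℂ) * τ / 4 + I * (Real.pi : ℂ) * (w + τ)) +
        (-(Real.pi : ℂ) * I * (τ + 2 * (w + (1 + τ) / 2))) =
        ((-(Real.pi : ℂ) * I * τ - 2 * (Real.pi : ℂ) * I * w) +
          (I * (Real.pi : ℂ) * τ / 4 + I * (Real.pi : ℂ) * w)) + -((Real.pi : ℂ) * I) by ring,
      Complex.exp_add, Complex.exp_add, Complex.exp_neg, Complex.exp_pi_mul_I, inv_neg, inv_one]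
    ring
  linear_combination (-I * jacobiTheta₂ (w + (1 + τ) / 2) τ) * this

lemma theta1_add_three (w τ : ℂ) : theta1 (w + 3) τ = -theta1 w τ := by
  rw [show w + 3 = (w + 1 + 1) + 1 by ring, theta1_add_one, theta1_add_one, theta1_add_one]
  ring

/-- The squared Gauss map G² descends to the torus ℂ/(ℤ + ℤτ):
G²(z + 1) = G²(z) and G²(z + τ) = G²(z). -/
theorem Gsq_doubly_periodic (τ : ℂ) (hτ : 0 < τ.im) (z : ℂ) :
    Gsq τ (z + 1) = Gsq τ z ∧ Gsq τ (z + τ) = Gsq τ z := by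
  constructor
  · unfold Gsq
    rw [show 3 * (z + 1) = 3 * z + 3 by ring, show 3 * z + 3 - τ = (3 * z - τ) + 3 by ring,
      theta1_add_three, theta1_add_three,
      show 2 * (Real.pi : ℂ) * I * (z + 1) = 2 * (Real.pi : ℂ) * I * z + 2 * (Real.pi : ℂ) * I
        by ring,
      Complex.exp_add, Complex.exp_two_pi_mul_I]
    simp only [mul_one, mul_neg, neg_mul, neg_neg, div_neg, neg_div]
  · unfold Gsq
    rw [show 3 * (z + τ) = 3 * z + 3 * τ by ring,
      show 3 * z + 3 * τ - τ = (3 * z - τ) + 3 * τ by ring,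
      theta1_add_tau, theta1_add_tau]
    set θa := theta1 (3 * z) (3 * τ)
    set θb := theta1 (3 * z - τ) (3 * τ)
    set E1 := Complex.exp (I * (Real.pi : ℂ) * τ / 3)
    have h1 : Complex.exp (2 * (Real.pi : ℂ) * I * (z + τ)) *
        Complex.exp (-(Real.pi : ℂ) * I * (3 * τ) - 2 * (Real.pi : ℂ) * I * (3 * z)) =
        Complex.exp (-(Real.pi : ℂ) * I * (3 * τ) - 2 * (Real.pi : ℂ) * I * (3 * z - τ)) *
        Complex.exp (2 * (Real.pi : ℂ) * I * z) := by
      rw [← Complex.exp_add, ← Complex.exp_add]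
      ring_nf
    set Ad := Complex.exp (-(Real.pi : ℂ) * I * (3 * τ) - 2 * (Real.pi : ℂ) * I * (3 * z - τ))
    have key : Ad * (E1 * Complex.exp (2 * (Real.pi : ℂ) * I * z) * θa) / (Ad * (-θb)) =
        (E1 * Complex.exp (2 * (Real.pi : ℂ) * I * z) * θa) / (-θb) :=
      mul_div_mul_left _ _ (Complex.exp_ne_zero _)
    have lhs_eq : -E1 * Complex.exp (2 * (Real.pi : ℂ) * I * (z + τ)) *
        (-Complex.exp (-(Real.pi : ℂ) * I * (3 * τ) - 2 * (Real.pi : ℂ) * I * (3 * z)) * θa) /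
        (-Ad * θb) =
        Ad * (E1 * Complex.exp (2 * (Real.pi : ℂ) * I * z) * θa) / (Ad * (-θb)) := by
      congr 1
      · linear_combination (E1 * θa) * h1
      · ring
    rw [lhs_eq, key]
    simp only [neg_mul, neg_div, div_neg, neg_neg]
end

section
/- Order-2 symmetry of the squared Gauss map about the symmetry center τ/6: let τ ∈ ℂ with Im τ > 0 and let z ∈ ℂ satisfy θ₁(3z; 3τ) ≠ 0 and θ₁(3z − τ; 3τ) ≠ 0. Then G²(z) · G²(τ/3 − z) = exp(4πi τ/3); in particular the product G²(z)·G²(τ/3 − z) is a nonzero constant independent of z, so that under the involution z ↦ τ/3 − z the Gauss map G transforms as G ↦ (const)/G. -/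
open Complex

open Real

/-! The reflection z ↦ τ/3 − z sends 3z to −(3z − τ) and 3z − τ to −3z, so by the oddness of θ₁
it inverts the theta quotient in G², and only the exponential prefactors survive in the product
G²(z)·G²(τ/3 − z). -/

/-- With `w = z + (1 + τ)/2` one has `-z + (1 + τ)/2 = -w + 1 + τ`; the quasi-periodicity factor
of `jacobiTheta₂` under a shift by `τ` turns `exp(-iπz)` into `-exp(iπz)`. -/
theorem theta1_neg (z τ : ℂ) : theta1 (-z) τ = -theta1 z τ := by
  set w := z + (1 + τ) / 2
  have hw : -z + (1 + τ) / 2 = (-w + 1) + τ := by ring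
  have hexp : cexp (I * π * τ / 4 + I * π * -z) * cexp (-π * I * (τ + 2 * (-w + 1))) =
      -cexp (I * π * τ / 4 + I * π * z) := by
    rw [← Complex.exp_add, show I * π * τ / 4 + I * π * -z + -π * I * (τ + 2 * (-w + 1)) =
      I * π * τ / 4 + I * π * z - π * I by ring, Complex.exp_sub, exp_pi_mul_I]
    ring
  simp only [theta1]
  rw [hw, jacobiTheta₂_add_left', jacobiTheta₂_add_left, jacobiTheta₂_neg_left]
  linear_combination (-I * jacobiTheta₂ w τ) * hexp

theorem Gsq_reflect (τ z : ℂ) :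
    Gsq τ (τ / 3 - z) = -cexp (I * π * τ / 3) * cexp (2 * π * I * (τ / 3 - z)) *
      theta1 (3 * z - τ) (3 * τ) / theta1 (3 * z) (3 * τ) := by
  rw [Gsq, show 3 * (τ / 3 - z) = -(3 * z - τ) by ring, show -(3 * z - τ) - τ = -(3 * z) by ring,
    theta1_neg, theta1_neg]
  ring

theorem Gsq_order_two_symmetry_general (τ : ℂ) (z : ℂ)
    (h1 : theta1 (3 * z) (3 * τ) ≠ 0) (h2 : theta1 (3 * z - τ) (3 * τ) ≠ 0) :
    Gsq τ z * Gsq τ (τ / 3 - z) =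
      Complex.exp (4 * (Real.pi : ℂ) * I * τ / 3) := by
  have hprefactor : cexp (I * π * τ / 3) * cexp (2 * π * I * z) *
      (cexp (I * π * τ / 3) * cexp (2 * π * I * (τ / 3 - z))) = cexp (4 * π * I * τ / 3) := by
    simp only [← Complex.exp_add]
    ring_nf
  rw [Gsq_reflect, Gsq, ← hprefactor, div_mul_div_comm, div_eq_iff (mul_ne_zero h2 h1)]
  ring

/-- Order-2 symmetry of G² about the symmetry center τ/6:
G²(z)·G²(τ/3 − z) = exp(4πiτ/3), whenever the relevant theta values are nonzero. -/
theorem Gsq_order_two_symmetry (τ : ℂ) (hτ : 0 < τ.im) (z : ℂ)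
    (h1 : theta1 (3 * z) (3 * τ) ≠ 0) (h2 : theta1 (3 * z - τ) (3 * τ) ≠ 0) :
    Gsq τ z * Gsq τ (τ / 3 - z) =
      Complex.exp (4 * (Real.pi : ℂ) * I * τ / 3) :=
  Gsq_order_two_symmetry_general τ z h1 h2
end

section
/- Location of the zeros of the squared Gauss map at 3-division points: let τ ∈ ℂ with Im τ > 0. (i) For every pair of integers k, m one has θ₁(3·(k/3 + m·τ) − τ; 3τ) ≠ 0. (ii) For every z ∈ ℂ with θ₁(3z − τ; 3τ) ≠ 0, one has G²(z) = 0 if and only if there exist integers k, m with z = k/3 + m·τ. -/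
open Complex

/-!
Up to a nonvanishing factor, θ₁(z; τ) is `jacobiTheta₂ (z + (1 + τ) / 2) τ`, so the whole statement
reduces to: `jacobiTheta₂ · τ` vanishes exactly on the half period `(1 + τ) / 2` plus the lattice
`ℤ + ℤτ`; both parts then compare `3z` and `3z - τ` with the lattice `ℤ + 3τℤ`.

The half period is a zero by parity and quasi-periodicity. For the converse, quasi-periodicity moves
a zero to `(1 + τ) / 2 + w` with `w` in the centred fundamental parallelogram. If `Im τ ≥ 4/5`,
pairing the terms `n` and `-(n + 1)` of the series factors `jacobiTheta₂ ((1 + τ) / 2 + w) τ` as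
`(1 - exp (-2πiw))` times a series `1 + ∑_{n ≥ 1} gₙ` with `‖gₙ‖ ≤ 3⁻ⁿ`, so `w = 0`. Smaller `Im τ`
is reduced to this case by `τ ↦ τ - round (Re τ)` followed by the functional equation for
`τ ↦ -1/τ`; since `4/5 < √3/2`, this multiplies `Im τ` by at least `10/9`.
-/

open Real Finset

lemma jacobiTheta₂_add_int_add_int_mul (k m : ℤ) (z τ : ℂ) :
    jacobiTheta₂ (z + k + m * τ) τ =
      cexp (-π * I * m ^ 2 * τ - 2 * π * I * m * z) * jacobiTheta₂ z τ := by
  rw [jacobiTheta₂, jacobiTheta₂, ← tsum_mul_left, ← (Equiv.subRight m).tsum_eq]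
  refine tsum_congr fun n ↦ ?_
  simp only [Equiv.subRight_apply, jacobiTheta₂_term, ← Complex.exp_add]
  exact Complex.exp_eq_exp_iff_exists_int.mpr ⟨(n - m) * k, by push_cast; ring⟩

lemma jacobiTheta₂_add_int_add_int_mul_eq_zero_iff (k m : ℤ) (z τ : ℂ) :
    jacobiTheta₂ (z + k + m * τ) τ = 0 ↔ jacobiTheta₂ z τ = 0 := by
  rw [jacobiTheta₂_add_int_add_int_mul, mul_eq_zero, or_iff_right (Complex.exp_ne_zero _)]

lemma jacobiTheta₂_add_int_right (k : ℤ) (z τ : ℂ) :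
    jacobiTheta₂ z (τ + k) = jacobiTheta₂ (z + k / 2) τ := by
  refine tsum_congr fun n ↦ ?_
  obtain ⟨j, hj⟩ := Int.even_mul_pred_self n
  have hj' : (n : ℂ) * (n - 1) = j + j := by exact_mod_cast hj
  exact Complex.exp_eq_exp_iff_exists_int.mpr
    ⟨j * k, by push_cast; linear_combination (π * I * k) * hj'⟩

lemma jacobiTheta₂_half_period (τ : ℂ) : jacobiTheta₂ ((1 + τ) / 2) τ = 0 := by
  set w := (1 + τ) / 2
  have h_shift : jacobiTheta₂ (w - τ) τ = jacobiTheta₂ w τ := by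
    rw [show w - τ = -w + 1 by ring, jacobiTheta₂_add_left, jacobiTheta₂_neg_left]
  have h := jacobiTheta₂_add_left' (w - τ) τ
  rw [sub_add_cancel, h_shift, show -π * I * (τ + 2 * (w - τ)) = -(π * I) by ring,
    Complex.exp_neg, Complex.exp_pi_mul_I] at h
  linear_combination h / 2

/-- `(jacobiTheta₂_term n z τ + jacobiTheta₂_term (-(n + 1)) z τ) / (1 - exp (-2πiw))` at
`z = (1 + τ) / 2 + w`, written so that it makes sense at `w = 0`. -/
noncomputable def thetaPairTerm (w τ : ℂ) (n : ℕ) : ℂ :=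
  cexp (π * I * (n + (n ^ 2 + n) * τ)) *
    ∑ k ∈ range (2 * n + 1), cexp (2 * π * I * ((n : ℂ) - k) * w)

lemma jacobiTheta₂_term_add_term_neg_succ (n : ℕ) (w τ : ℂ) :
    jacobiTheta₂_term n ((1 + τ) / 2 + w) τ + jacobiTheta₂_term (-(n + 1)) ((1 + τ) / 2 + w) τ =
      (1 - cexp (-(2 * π * I * w))) * thetaPairTerm w τ n := by
  set x := cexp (-(2 * π * I * w))
  set E := cexp (π * I * (n + (n ^ 2 + n) * τ) + 2 * π * I * n * w) with hE
  have h_pos : jacobiTheta₂_term n ((1 + τ) / 2 + w) τ = E :=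
    Complex.exp_eq_exp_iff_exists_int.mpr ⟨0, by push_cast; ring⟩
  have h_neg : jacobiTheta₂_term (-(n + 1)) ((1 + τ) / 2 + w) τ = -(E * x ^ (2 * n + 1)) := by
    rw [show -(E * x ^ (2 * n + 1)) = cexp (π * I) * (E * x ^ (2 * n + 1)) by
      rw [Complex.exp_pi_mul_I]; ring, ← Complex.exp_nat_mul, ← Complex.exp_add, ← Complex.exp_add]
    exact Complex.exp_eq_exp_iff_exists_int.mpr ⟨-(n + 1), by push_cast; ring⟩
  have h_sum : thetaPairTerm w τ n = E * ∑ k ∈ range (2 * n + 1), x ^ k := by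
    rw [thetaPairTerm, mul_sum, mul_sum]
    refine sum_congr rfl fun k _ ↦ ?_
    rw [hE, ← Complex.exp_nat_mul, ← Complex.exp_add, ← Complex.exp_add]
    congr 1
    ring
  rw [h_pos, h_neg, h_sum]
  linear_combination E * geom_sum_mul x (2 * n + 1)

lemma jacobiTheta₂_half_period_add_eq_mul_tsum {τ : ℂ} (hτ : 0 < τ.im) (w : ℂ) :
    jacobiTheta₂ ((1 + τ) / 2 + w) τ =
      (1 - cexp (-(2 * π * I * w))) * ∑' n : ℕ, thetaPairTerm w τ n := by
  have hsum := (hasSum_jacobiTheta₂_term ((1 + τ) / 2 + w) hτ).summable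
  have h_nonneg : Summable fun n : ℕ ↦ jacobiTheta₂_term n ((1 + τ) / 2 + w) τ :=
    hsum.comp_injective Nat.cast_injective
  have h_neg : Summable fun n : ℕ ↦ jacobiTheta₂_term (-(n + 1)) ((1 + τ) / 2 + w) τ :=
    hsum.comp_injective fun a b hab ↦ by simpa using hab
  rw [jacobiTheta₂,
    tsum_of_nat_of_neg_add_one (f := fun n ↦ jacobiTheta₂_term n _ τ) h_nonneg h_neg, ← h_nonneg.tsum_add h_neg, ← tsum_mul_left]
  exact tsum_congr fun n ↦ jacobiTheta₂_term_add_term_neg_succ n w τ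

lemma norm_thetaPairTerm_le {w τ : ℂ} (hw : |w.im| ≤ τ.im / 2) (n : ℕ) :
    ‖thetaPairTerm w τ n‖ ≤ (2 * n + 1) * rexp (-π * n ^ 2 * τ.im) := by
  have h_prefactor : ‖cexp (π * I * (n + (n ^ 2 + n) * τ))‖ = rexp (-π * (n ^ 2 + n) * τ.im) := by
    rw [Complex.norm_exp]
    congr 1
    simp [Complex.mul_re, Complex.mul_im, sq]
    ring
  have h_summand : ∀ k ∈ range (2 * n + 1),
      ‖cexp (2 * π * I * ((n : ℂ) - k) * w)‖ ≤ rexp (π * n * τ.im) := by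
    intro k hk
    have hk : (k : ℝ) ≤ 2 * n := by exact_mod_cast Nat.lt_succ_iff.mp (mem_range.mp hk)
    have h_dist : |(n : ℝ) - k| ≤ n :=
      abs_le.mpr ⟨by linarith, by linarith [k.cast_nonneg (α := ℝ)]⟩
    have h_prod : |((n : ℝ) - k) * w.im| ≤ n * (τ.im / 2) := by
      rw [abs_mul]
      exact mul_le_mul h_dist hw (abs_nonneg _) n.cast_nonneg
    rw [Complex.norm_exp, Real.exp_le_exp]
    simp [Complex.mul_re, Complex.mul_im]
    nlinarith [neg_abs_le (((n : ℝ) - k) * w.im), Real.pi_pos]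
  calc ‖thetaPairTerm w τ n‖
      ≤ rexp (-π * (n ^ 2 + n) * τ.im) * ((2 * n + 1) * rexp (π * n * τ.im)) := by
        rw [thetaPairTerm, norm_mul, h_prefactor]
        gcongr
        refine (norm_sum_le_of_le _ h_summand).trans_eq ?_
        rw [sum_const, card_range, nsmul_eq_mul]
        push_cast
        ring
    _ = (2 * n + 1) * rexp (-π * n ^ 2 * τ.im) := by
        rw [mul_left_comm, ← Real.exp_add]
        ring_nf

lemma exp_neg_four_fifths_pi_le : rexp (-(4 / 5 * π)) ≤ 1 / 9 := by
  have h_three : 3 ≤ rexp (2 / 5 * π) := by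
    nlinarith [Real.quadratic_le_exp_of_nonneg (x := 2 / 5 * π) (by positivity), Real.pi_gt_d2]
  have h_sq : rexp (4 / 5 * π) = rexp (2 / 5 * π) ^ 2 := by
    rw [← Real.exp_nat_mul]
    ring_nf
  rw [Real.exp_neg, h_sq, inv_eq_one_div]
  gcongr
  nlinarith

lemma two_mul_add_one_mul_exp_le {t : ℝ} (ht : 4 / 5 ≤ t) (n : ℕ) :
    (2 * n + 1) * rexp (-π * n ^ 2 * t) ≤ (1 / 3) ^ n := by
  have h_lin : (2 * n + 1 : ℝ) ≤ 3 ^ n := by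
    have := one_add_mul_le_pow (a := (2 : ℝ)) (by norm_num) n
    norm_num at this
    linarith
  have h_exp : rexp (-π * n ^ 2 * t) ≤ (1 / 9) ^ n := by
    calc rexp (-π * n ^ 2 * t) ≤ rexp (n * -(4 / 5 * π)) := by
          rw [Real.exp_le_exp]
          have h_sq : (n : ℝ) ≤ n ^ 2 := by exact_mod_cast Nat.le_self_pow two_ne_zero n
          have : (n : ℝ) * (4 / 5) ≤ n ^ 2 * t := by
            calc (n : ℝ) * (4 / 5) ≤ n ^ 2 * (4 / 5) := by gcongr
              _ ≤ n ^ 2 * t := by gcongr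
          nlinarith [Real.pi_pos]
      _ = rexp (-(4 / 5 * π)) ^ n := Real.exp_nat_mul _ n
      _ ≤ (1 / 9) ^ n := pow_le_pow_left₀ (Real.exp_nonneg _) exp_neg_four_fifths_pi_le n
  calc (2 * n + 1) * rexp (-π * n ^ 2 * t) ≤ 3 ^ n * (1 / 9) ^ n := by gcongr
    _ = (1 / 3) ^ n := by rw [← mul_pow]; norm_num

lemma tsum_thetaPairTerm_ne_zero {w τ : ℂ} (hτ : 4 / 5 ≤ τ.im) (hw : |w.im| ≤ τ.im / 2) :
    ∑' n : ℕ, thetaPairTerm w τ n ≠ 0 := by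
  have h_bound (n : ℕ) : ‖thetaPairTerm w τ n‖ ≤ (1 / 3) ^ n :=
    (norm_thetaPairTerm_le hw n).trans (two_mul_add_one_mul_exp_le hτ n)
  have h_geom : HasSum (fun n : ℕ ↦ ((1 : ℝ) / 3) ^ (n + 1)) (1 / 2) := by
    have h := (hasSum_geometric_of_lt_one (r := (1 : ℝ) / 3) (by norm_num) (by norm_num)).mul_left
      (1 / 3)
    rw [show (1 : ℝ) / 3 * (1 - 1 / 3)⁻¹ = 1 / 2 by norm_num] at h
    simpa only [← pow_succ'] using h
  have h_summable : Summable (thetaPairTerm w τ) :=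
    .of_norm_bounded (summable_geometric_of_lt_one (by norm_num) (by norm_num)) h_bound
  have h_tail : ‖∑' n : ℕ, thetaPairTerm w τ (n + 1)‖ ≤ 1 / 2 :=
    tsum_of_norm_bounded h_geom fun n ↦ h_bound (n + 1)
  have h_head : thetaPairTerm w τ 0 = 1 := by simp [thetaPairTerm]
  rw [h_summable.tsum_eq_zero_add, h_head]
  intro h
  rw [add_eq_zero_iff_eq_neg'] at h
  have h_norm := congrArg norm h
  norm_num at h_norm
  linarith

lemma one_sub_exp_neg_two_pi_I_mul_ne_zero {w : ℂ} (hre : |w.re| ≤ 1 / 2) (hw : w ≠ 0) :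
    1 - cexp (-(2 * π * I * w)) ≠ 0 := by
  rw [sub_ne_zero, ne_comm, Ne, Complex.exp_eq_one_iff]
  rintro ⟨n, hn⟩
  have hw_eq : w = -n :=
    mul_left_cancel₀ Complex.two_pi_I_ne_zero (by linear_combination -hn)
  have hn_abs : |(n : ℝ)| < 1 := by
    rw [hw_eq] at hre
    simp only [Complex.neg_re, Complex.intCast_re, abs_neg] at hre
    linarith
  have hn_zero : n = 0 := Int.abs_lt_one_iff.mp (by exact_mod_cast hn_abs)
  exact hw (by simp [hw_eq, hn_zero])

lemma jacobiTheta₂_half_period_add_ne_zero {τ w : ℂ} (hτ : 4 / 5 ≤ τ.im) (hre : |w.re| ≤ 1 / 2)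
    (him : |w.im| ≤ τ.im / 2) (hw : w ≠ 0) : jacobiTheta₂ ((1 + τ) / 2 + w) τ ≠ 0 := by
  rw [jacobiTheta₂_half_period_add_eq_mul_tsum (by linarith) w]
  exact mul_ne_zero (one_sub_exp_neg_two_pi_I_mul_ne_zero hre hw)
    (tsum_thetaPairTerm_ne_zero hτ him)

lemma exists_eq_int_add_int_mul_add {τ : ℂ} (hτ : 0 < τ.im) (z : ℂ) :
    ∃ (k m : ℤ) (w : ℂ), z = k + m * τ + w ∧ |w.re| ≤ 1 / 2 ∧ |w.im| ≤ τ.im / 2 := by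
  set m := round (z.im / τ.im)
  set k := round (z.re - m * τ.re)
  refine ⟨k, m, z - k - m * τ, by ring, ?_, ?_⟩
  · have h_re : (z - k - m * τ).re = z.re - m * τ.re - k := by
      simp
      ring
    rw [h_re]
    exact abs_sub_round _
  · have h_im : (z - k - m * τ).im = (z.im / τ.im - m) * τ.im := by
      simp
      field_simp
    rw [h_im, abs_mul, abs_of_pos hτ]
    calc |z.im / τ.im - m| * τ.im ≤ 1 / 2 * τ.im := by gcongr; exact abs_sub_round _
      _ = τ.im / 2 := by ring

lemma exists_eq_half_period_add_of_four_fifths_le {τ z : ℂ} (hτ : 4 / 5 ≤ τ.im)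
    (hz : jacobiTheta₂ z τ = 0) : ∃ k m : ℤ, z = (1 + τ) / 2 + k + m * τ := by
  obtain ⟨k, m, w, hkm, hre, him⟩ :=
    exists_eq_int_add_int_mul_add (τ := τ) (by linarith) (z - (1 + τ) / 2)
  refine ⟨k, m, by_contra fun hne ↦ ?_⟩
  have hw : w ≠ 0 := fun h ↦ hne (by linear_combination hkm + h)
  refine jacobiTheta₂_half_period_add_ne_zero hτ hre him hw ?_
  rw [← jacobiTheta₂_add_int_add_int_mul_eq_zero_iff k m]
  convert hz using 2
  linear_combination -hkm

lemma jacobiTheta₂_eq_zero_iff_div_neg_one_div {τ : ℂ} (hτ : τ ≠ 0) (z : ℂ) :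
    jacobiTheta₂ z τ = 0 ↔ jacobiTheta₂ (z / τ) (-1 / τ) = 0 := by
  have h_factor : (-I * τ) ^ (1 / 2 : ℂ) ≠ 0 := by
    simp [Complex.cpow_eq_zero_iff, hτ]
  rw [jacobiTheta₂_functional_equation, mul_eq_zero,
    or_iff_right (mul_ne_zero (one_div_ne_zero h_factor) (Complex.exp_ne_zero _))]

lemma ten_ninths_mul_im_le_im_neg_one_div {τ : ℂ} (hτ : 0 < τ.im) (hτ' : τ.im < 4 / 5)
    (hre : |τ.re| ≤ 1 / 2) : 10 / 9 * τ.im ≤ (-1 / τ).im := by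
  have h_ne : τ ≠ 0 := fun h ↦ by simp [h] at hτ
  rw [neg_div, Complex.neg_im, one_div, Complex.inv_im, neg_div, neg_neg,
    le_div_iff₀ (Complex.normSq_pos.mpr h_ne), Complex.normSq_apply]
  have h_normSq : τ.re * τ.re + τ.im * τ.im ≤ 9 / 10 := by
    nlinarith [abs_le.mp hre]
  nlinarith [mul_le_mul_of_nonneg_left h_normSq hτ.le]

lemma exists_eq_half_period_add_of_le_pow_mul (N : ℕ) {τ z : ℂ} (hτ : 0 < τ.im)
    (hN : 4 / 5 ≤ (10 / 9) ^ N * τ.im) (hz : jacobiTheta₂ z τ = 0) :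
    ∃ k m : ℤ, z = (1 + τ) / 2 + k + m * τ := by
  induction N generalizing τ z with
  | zero => exact exists_eq_half_period_add_of_four_fifths_le (by simpa using hN) hz
  | succ N ih =>
    rcases le_or_gt (4 / 5) τ.im with hτ_large | hτ_small
    · exact exists_eq_half_period_add_of_four_fifths_le hτ_large hz
    set a := round τ.re
    set τ₁ := τ - a
    have hτ₁_im : τ₁.im = τ.im := by simp [τ₁]
    have hτ₁ : τ₁ ≠ 0 := fun h ↦ by simp [← hτ₁_im, h] at hτ
    have h_im : 10 / 9 * τ.im ≤ (-1 / τ₁).im := by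
      rw [← hτ₁_im]
      refine ten_ninths_mul_im_le_im_neg_one_div (by linarith) (by linarith) ?_
      simpa [τ₁] using abs_sub_round τ.re
    have hz₁ : jacobiTheta₂ ((z + a / 2) / τ₁) (-1 / τ₁) = 0 := by
      rw [← jacobiTheta₂_eq_zero_iff_div_neg_one_div hτ₁, ← jacobiTheta₂_add_int_right,
        sub_add_cancel]
      exact hz
    have hN₁ : 4 / 5 ≤ (10 / 9) ^ N * (-1 / τ₁).im :=
      calc 4 / 5 ≤ (10 / 9) ^ (N + 1) * τ.im := hN
        _ = (10 / 9) ^ N * (10 / 9 * τ.im) := by ring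
        _ ≤ (10 / 9) ^ N * (-1 / τ₁).im := by gcongr
    obtain ⟨k, m, hkm⟩ := ih (by linarith) hN₁ hz₁
    refine ⟨-1 - a - m - k * a, k, ?_⟩
    linear_combination (norm := skip) τ₁ * hkm
    field_simp
    push_cast
    ring

theorem jacobiTheta₂_eq_zero_iff {τ : ℂ} (hτ : 0 < τ.im) (z : ℂ) :
    jacobiTheta₂ z τ = 0 ↔ ∃ k m : ℤ, z = (1 + τ) / 2 + k + m * τ := by
  refine ⟨fun hz ↦ ?_, ?_⟩
  · obtain ⟨N, hN⟩ := pow_unbounded_of_one_lt (4 / 5 / τ.im) (by norm_num : (1 : ℝ) < 10 / 9)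
    exact exists_eq_half_period_add_of_le_pow_mul N hτ ((div_lt_iff₀ hτ).mp hN).le hz
  · rintro ⟨k, m, rfl⟩
    rw [jacobiTheta₂_add_int_add_int_mul_eq_zero_iff, jacobiTheta₂_half_period]

theorem theta1_eq_zero_iff {τ : ℂ} (hτ : 0 < τ.im) (z : ℂ) :
    theta1 z τ = 0 ↔ ∃ k m : ℤ, z = k + m * τ := by
  rw [theta1, mul_eq_zero,
    or_iff_right (mul_ne_zero (neg_ne_zero.mpr I_ne_zero) (Complex.exp_ne_zero _)),
    jacobiTheta₂_eq_zero_iff hτ]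
  exact exists₂_congr fun k m ↦ ⟨fun h ↦ by linear_combination h, fun h ↦ by linear_combination h⟩

lemma eq_zero_of_intCast_add_intCast_mul_eq_zero {τ : ℂ} (hτ : 0 < τ.im) {a b : ℤ}
    (h : (a : ℂ) + b * τ = 0) : a = 0 ∧ b = 0 := by
  have hb : b = 0 := by
    have h_im := congrArg Complex.im h
    simp only [Complex.add_im, Complex.intCast_im, Complex.mul_im, Complex.intCast_re, zero_mul,
      zero_add, add_zero, Complex.zero_im] at h_im
    exact_mod_cast (mul_eq_zero.mp h_im).resolve_right hτ.ne'
  subst hb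
  exact ⟨by simpa using h, rfl⟩

lemma Gsq_eq_zero_iff {τ z : ℂ} (h : theta1 (3 * z - τ) (3 * τ) ≠ 0) :
    Gsq τ z = 0 ↔ theta1 (3 * z) (3 * τ) = 0 := by
  rw [Gsq, div_eq_zero_iff, or_iff_left h, mul_eq_zero,
    or_iff_right (mul_ne_zero (neg_ne_zero.mpr (Complex.exp_ne_zero _)) (Complex.exp_ne_zero _))]

/-- Location of the zeros of the squared Gauss map at 3-division points:
(i) the denominator θ₁(3z − τ; 3τ) does not vanish at z = k/3 + m·τ;
(ii) away from the poles, G²(z) = 0 iff z = k/3 + m·τ for some integers k, m. -/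
theorem Gsq_zeros (τ : ℂ) (hτ : 0 < τ.im) :
    (∀ k m : ℤ, theta1 (3 * ((k : ℂ) / 3 + (m : ℂ) * τ) - τ) (3 * τ) ≠ 0) ∧
    (∀ z : ℂ, theta1 (3 * z - τ) (3 * τ) ≠ 0 →
      (Gsq τ z = 0 ↔ ∃ k m : ℤ, z = (k : ℂ) / 3 + (m : ℂ) * τ)) := by
  have h3τ : 0 < (3 * τ).im := by simpa using hτ
  refine ⟨fun k m h ↦ ?_, fun z hz ↦ ?_⟩
  · obtain ⟨a, b, hab⟩ := (theta1_eq_zero_iff h3τ _).mp h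
    have hb := (eq_zero_of_intCast_add_intCast_mul_eq_zero hτ (a := k - a) (b := 3 * m - 1 - 3 * b)
      (by push_cast; linear_combination hab)).2
    omega
  · rw [Gsq_eq_zero_iff hz, theta1_eq_zero_iff h3τ]
    exact exists₂_congr fun k m ↦
      ⟨fun h ↦ by linear_combination h / 3, fun h ↦ by linear_combination 3 * h⟩
end
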